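/- arXiv:math/0305332 — 3 statements merged into one kernel-verified Lean document; each statement's English description precedes it below -/
import Mathlib

section
/- The vertices (extreme points) of the Birkhoff polytope B_n are exactly the n×n permutation matrices. -/
theorem birkhoff_extremePoints (n : ℕ) :
    Set.extremePoints ℝ (doublyStochastic ℝ (Fin n) : Set (Matrix (Fin n) (Fin n) ℝ)) =
      {M | ∃ σ : Equiv.Perm (Fin n), M = σ.permMatrix ℝ} := by
  apply Set.Subset.antisymm
  · intro M hM
    have := extremePoints_convexHull_subset
      (A := {σ.permMatrix ℝ | σ : Equiv.Perm (Fin n)}) (𝕜 := ℝ)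
      (by rwa [← doublyStochastic_eq_convexHull_permMatrix])
    obtain ⟨σ, hσ⟩ := this
    exact ⟨σ, hσ.symm⟩
  · rintro M ⟨σ, rfl⟩
    refine ⟨permMatrix_mem_doublyStochastic, ?_⟩
    rintro x hx y hy ⟨a, b, ha, hb, hab, hxy⟩
    -- entrywise argument
    have key : x = σ.permMatrix ℝ ∧ y = σ.permMatrix ℝ := by
      have hx0 : ∀ i j, 0 ≤ x i j := fun i j => nonneg_of_mem_doublyStochastic hx
      have hy0 : ∀ i j, 0 ≤ y i j := fun i j => nonneg_of_mem_doublyStochastic hy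
      have hx1 : ∀ i j, x i j ≤ 1 := fun i j => le_one_of_mem_doublyStochastic hx
      have hy1 : ∀ i j, y i j ≤ 1 := fun i j => le_one_of_mem_doublyStochastic hy
      have heq : ∀ i j, a * x i j + b * y i j = (σ.permMatrix ℝ) i j := by
        intro i j
        have := congrFun (congrFun hxy i) j
        simpa [Matrix.add_apply, Matrix.smul_apply, smul_eq_mul] using this
      have hentry : ∀ i j, x i j = (σ.permMatrix ℝ) i j ∧ y i j = (σ.permMatrix ℝ) i j := by
        intro i j
        have h := heq i j
        by_cases hij : σ i = j
        · have h1 : (σ.permMatrix ℝ) i j = 1 := by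
            simp [Equiv.Perm.permMatrix, Matrix.one_apply, Equiv.toPEquiv, hij,
              PEquiv.toMatrix_apply]
          rw [h1] at h ⊢
          constructor <;> nlinarith [hx1 i j, hy1 i j, hx0 i j, hy0 i j]
        · have h1 : (σ.permMatrix ℝ) i j = 0 := by
            simp [Equiv.Perm.permMatrix, Matrix.one_apply, Equiv.toPEquiv, hij,
              PEquiv.toMatrix_apply]
          rw [h1] at h ⊢
          constructor <;> nlinarith [hx0 i j, hy0 i j]
      constructor <;> (ext i j)
      exacts [(hentry i j).1, (hentry i j).2]
    exact key.1
end

section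
/- Every doubly stochastic n×n matrix has a nonzero permanent; equivalently, for every x ∈ B_n there exists a permutation σ with x_{j σ(j)} > 0 for all j. -/
/-!
By Birkhoff's theorem a doubly stochastic matrix is a convex combination `∑ w σ • P_σ` of
permutation matrices. Some weight `w σ` is positive, and it bounds every entry `x j (σ j)` from
below, so `σ` is a permutation with positive diagonal. Its term in the permanent is then positive,
and the other terms are nonnegative.
-/

open Finset Matrix

variable {n R : Type*} [Fintype n] [DecidableEq n]

theorem le_apply_of_sum_smul_permMatrix_eq [Semiring R] [PartialOrder R] [IsOrderedRing R]
    {M : Matrix n n R} {w : Equiv.Perm n → R} (hw : ∀ τ, 0 ≤ w τ)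
    (hM : ∑ τ, w τ • τ.permMatrix R = M) (σ : Equiv.Perm n) (i : n) :
    w σ ≤ M i (σ i) := by
  rw [← hM, Matrix.sum_apply]
  simp only [Matrix.smul_apply, smul_eq_mul]
  calc w σ = w σ * σ.permMatrix R i (σ i) := by
        simp [PEquiv.toMatrix_apply, Equiv.toPEquiv_apply]
    _ ≤ ∑ τ, w τ * τ.permMatrix R i (σ i) :=
      single_le_sum (f := fun τ => w τ * τ.permMatrix R i (σ i))
        (fun τ _ => mul_nonneg (hw τ)
          (nonneg_of_mem_doublyStochastic permMatrix_mem_doublyStochastic))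
        (mem_univ σ)

theorem exists_perm_forall_pos_of_mem_doublyStochastic [Field R] [LinearOrder R]
    [IsStrictOrderedRing R] {M : Matrix n n R} (hM : M ∈ doublyStochastic R n) :
    ∃ σ : Equiv.Perm n, ∀ i, 0 < M i (σ i) := by
  obtain ⟨w, hw, hw_sum, hwM⟩ := exists_eq_sum_perm_of_mem_doublyStochastic hM
  obtain ⟨σ, -, hσ⟩ : ∃ σ ∈ univ, (0 : R) < w σ :=
    exists_lt_of_sum_lt (by simp [hw_sum])
  exact ⟨σ, fun i => hσ.trans_le (le_apply_of_sum_smul_permMatrix_eq hw hwM σ i)⟩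

theorem permanent_pos_of_nonneg_of_forall_pos [CommSemiring R] [PartialOrder R]
    [IsStrictOrderedRing R] {M : Matrix n n R} (hM : ∀ i j, 0 ≤ M i j) {σ : Equiv.Perm n}
    (hσ : ∀ i, 0 < M i (σ i)) : 0 < M.permanent := by
  rw [← permanent_transpose, permanent]
  exact sum_pos' (fun τ _ => prod_nonneg fun i _ => hM _ _)
    ⟨σ, mem_univ σ, prod_pos fun i _ => hσ i⟩

theorem birkhoff_permanent_pos (n : ℕ) (x : Matrix (Fin n) (Fin n) ℝ)
    (hx : x ∈ doublyStochastic ℝ (Fin n)) :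
    x.permanent ≠ 0 ∧ ∃ σ : Equiv.Perm (Fin n), ∀ j, 0 < x j (σ j) := by
  obtain ⟨σ, hσ⟩ := exists_perm_forall_pos_of_mem_doublyStochastic hx
  exact ⟨(permanent_pos_of_nonneg_of_forall_pos (M := x)
    (fun _ _ => nonneg_of_mem_doublyStochastic hx) hσ).ne', σ, hσ⟩
end

section
/- The number of integer points in the dilate t·B_3 of the third Birkhoff polytope is #(t·B_3 ∩ ℤ^9) = 3·binom(t+3,4) + binom(t+2,2) for all positive integers t; in particular for t = 1 it equals 6. -/
open Pointwise Finset

lemma cardAdt : ∀ (k n : ℕ), (Finset.Nat.antidiagonalTuple (k+1) n).card = (n+k).choose k := by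
  intro k
  induction k with
  | zero => intro n; simp
  | succ k ih =>
    intro n
    have hset : Finset.Nat.antidiagonalTuple (k+2) n =
        (Finset.range (n+1)).biUnion
          (fun a => (Finset.Nat.antidiagonalTuple (k+1) (n-a)).image
            (fun f => (Fin.cons a f : Fin (k+2) → ℕ))) := by
      ext x
      simp only [Finset.Nat.mem_antidiagonalTuple, Finset.mem_biUnion, Finset.mem_range,
        Finset.mem_image]
      constructor
      · intro h
        have hsum : x 0 + ∑ i : Fin (k+1), Fin.tail x i = n := by
          rw [Fin.sum_univ_succ] at h
          exact h
        refine ⟨x 0, by omega, Fin.tail x, ?_, Fin.cons_self_tail x⟩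
        exact by omega
      · rintro ⟨a, ha, f, hf, rfl⟩
        rw [Fin.sum_univ_succ]
        simp only [Fin.cons_zero, Fin.cons_succ]
        omega
    rw [hset, Finset.card_biUnion]
    · have h1 : ∀ a ∈ Finset.range (n+1),
          ((Finset.Nat.antidiagonalTuple (k+1) (n-a)).image
            (fun f => (Fin.cons a f : Fin (k+2) → ℕ))).card
            = (n - a + k).choose k := by
        intro a _
        rw [Finset.card_image_of_injective _ (Fin.cons_right_injective (α := fun _ => ℕ) a), ih]
      rw [Finset.sum_congr rfl h1]
      have h2 : ∑ a ∈ Finset.range (n+1), (n - a + k).choose k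
          = ∑ a ∈ Finset.range (n+1), (a + k).choose k := by
        rw [← Finset.sum_range_reflect]
        apply Finset.sum_congr rfl
        intro a ha
        simp only [Finset.mem_range] at ha
        congr 1
        omega
      rw [h2]
      have h3 := Nat.sum_Icc_choose (n + k) k
      rw [← Finset.Ico_add_one_right_eq_Icc, Finset.sum_Ico_eq_sum_range] at h3
      have he : n + k + 1 - k = n + 1 := by omega
      rw [he] at h3
      calc ∑ a ∈ Finset.range (n+1), (a + k).choose k
          = ∑ a ∈ Finset.range (n+1), (k + a).choose k := by
            apply Finset.sum_congr rfl; intro a _; rw [Nat.add_comm]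
        _ = (n + k + 1).choose (k + 1) := h3
        _ = (n + (k+1)).choose (k+1) := by congr 1
    · intro a ha b hb hab
      simp only [Finset.disjoint_left, Finset.mem_image]
      rintro x ⟨f, _, rfl⟩ ⟨g, _, hg⟩
      have := congrFun hg 0
      simp only [Fin.cons_zero] at this
      omega

def Sset (t : ℕ) : Set (Matrix (Fin 3) (Fin 3) ℤ) :=
  {x | (∀ i j, 0 ≤ x i j) ∧ (∀ i, ∑ j, x i j = (t : ℤ)) ∧ (∀ j, ∑ i, x i j = (t : ℤ))}

def G1 (w : Fin 5 → ℕ) : Matrix (Fin 3) (Fin 3) ℤ :=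
  !![(w 0 : ℤ) + w 2, (w 1 : ℤ) + w 4, (w 3 : ℤ);
     (w 4 : ℤ), (w 0 : ℤ) + w 3, (w 1 : ℤ) + w 2;
     (w 1 : ℤ) + w 3, (w 2 : ℤ), (w 0 : ℤ) + w 4]

def G2 (w : Fin 5 → ℕ) : Matrix (Fin 3) (Fin 3) ℤ :=
  !![(w 0 : ℤ) + w 2, (w 4 : ℤ), (w 1 : ℤ) + 1 + w 3;
     (w 1 : ℤ) + 1 + w 4, (w 0 : ℤ) + w 3, (w 2 : ℤ);
     (w 3 : ℤ), (w 1 : ℤ) + 1 + w 2, (w 0 : ℤ) + w 4]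

def G3 (w : Fin 5 → ℕ) : Matrix (Fin 3) (Fin 3) ℤ :=
  !![(w 2 : ℤ), (w 0 : ℤ) + 1 + w 4, (w 1 : ℤ) + 1 + w 3;
     (w 1 : ℤ) + 1 + w 4, (w 3 : ℤ), (w 0 : ℤ) + 1 + w 2;
     (w 0 : ℤ) + 1 + w 3, (w 1 : ℤ) + 1 + w 2, (w 4 : ℤ)]

def B1 (t : ℕ) : Finset (Fin 5 → ℕ) := Finset.Nat.antidiagonalTuple 5 t
def B2 (t : ℕ) : Finset (Fin 5 → ℕ) :=
  (Finset.Nat.antidiagonalTuple 5 (t-1)).filter (fun w => ∑ i, w i + 1 = t)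
def B3 (t : ℕ) : Finset (Fin 5 → ℕ) :=
  (Finset.Nat.antidiagonalTuple 5 (t-2)).filter (fun w => ∑ i, w i + 2 = t)

lemma mem_B1 {t : ℕ} {w : Fin 5 → ℕ} : w ∈ B1 t ↔ w 0 + w 1 + w 2 + w 3 + w 4 = t := by
  rw [B1, Finset.Nat.mem_antidiagonalTuple, Fin.sum_univ_five]

lemma mem_B2 {t : ℕ} {w : Fin 5 → ℕ} : w ∈ B2 t ↔ w 0 + w 1 + w 2 + w 3 + w 4 + 1 = t := by
  rw [B2, Finset.mem_filter, Finset.Nat.mem_antidiagonalTuple, Fin.sum_univ_five]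
  omega

lemma mem_B3 {t : ℕ} {w : Fin 5 → ℕ} : w ∈ B3 t ↔ w 0 + w 1 + w 2 + w 3 + w 4 + 2 = t := by
  rw [B3, Finset.mem_filter, Finset.Nat.mem_antidiagonalTuple, Fin.sum_univ_five]
  omega

lemma mem_Sset {t : ℕ} {x : Matrix (Fin 3) (Fin 3) ℤ} :
    x ∈ Sset t ↔
      (0 ≤ x 0 0 ∧ 0 ≤ x 0 1 ∧ 0 ≤ x 0 2 ∧ 0 ≤ x 1 0 ∧ 0 ≤ x 1 1 ∧ 0 ≤ x 1 2 ∧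
       0 ≤ x 2 0 ∧ 0 ≤ x 2 1 ∧ 0 ≤ x 2 2) ∧
      (x 0 0 + x 0 1 + x 0 2 = (t:ℤ) ∧ x 1 0 + x 1 1 + x 1 2 = (t:ℤ) ∧
        x 2 0 + x 2 1 + x 2 2 = (t:ℤ)) ∧
      (x 0 0 + x 1 0 + x 2 0 = (t:ℤ) ∧ x 0 1 + x 1 1 + x 2 1 = (t:ℤ) ∧
        x 0 2 + x 1 2 + x 2 2 = (t:ℤ)) := by
  constructor
  · rintro ⟨h1, h2, h3⟩
    have r0 := h2 0; have r1 := h2 1; have r2 := h2 2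
    have c0 := h3 0; have c1 := h3 1; have c2 := h3 2
    simp only [Fin.sum_univ_three] at r0 r1 r2 c0 c1 c2
    exact ⟨⟨h1 0 0, h1 0 1, h1 0 2, h1 1 0, h1 1 1, h1 1 2, h1 2 0, h1 2 1, h1 2 2⟩,
      ⟨r0, r1, r2⟩, ⟨c0, c1, c2⟩⟩
  · rintro ⟨⟨p1,p2,p3,p4,p5,p6,p7,p8,p9⟩, ⟨r0,r1,r2⟩, ⟨c0,c1,c2⟩⟩
    refine ⟨fun i j => ?_, fun i => ?_, fun j => ?_⟩
    · fin_cases i <;> fin_cases j <;> assumption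
    · fin_cases i <;> simp only [Fin.sum_univ_three] <;> assumption
    · fin_cases j <;> simp only [Fin.sum_univ_three] <;> assumption

set_option maxHeartbeats 2000000 in
lemma Sset_eq (t : ℕ) (ht : 0 < t) :
    Sset t = (G1 '' (B1 t : Set (Fin 5 → ℕ))) ∪ (G2 '' (B2 t : Set (Fin 5 → ℕ))) ∪
      (G3 '' (B3 t : Set (Fin 5 → ℕ))) := by
  ext x
  constructor
  · intro hx
    rw [mem_Sset] at hx
    obtain ⟨⟨p1,p2,p3,p4,p5,p6,p7,p8,p9⟩, ⟨r0,r1,r2⟩, ⟨c0,c1,c2⟩⟩ := hx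
    by_cases h1 : x 2 1 ≤ x 1 2 ∧ x 2 1 ≤ x 0 0
    · left; left
      refine ⟨![(x 0 0 - x 2 1).toNat, (x 1 2 - x 2 1).toNat, (x 2 1).toNat,
        (x 0 2).toNat, (x 1 0).toNat], ?_, ?_⟩
      · rw [Finset.mem_coe, mem_B1]
        simp
        omega
      · ext i j
        fin_cases i <;> fin_cases j <;>
          simp [G1] <;> omega
    · by_cases h2 : x 1 2 < x 2 1 ∧ x 1 2 ≤ x 0 0
      · left; right
        refine ⟨![(x 0 0 - x 1 2).toNat, (x 2 1 - x 1 2 - 1).toNat, (x 1 2).toNat,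
          (x 2 0).toNat, (x 0 1).toNat], ?_, ?_⟩
        · rw [Finset.mem_coe, mem_B2]
          simp
          omega
        · ext i j
          fin_cases i <;> fin_cases j <;>
            simp [G2] <;> omega
      · right
        refine ⟨![(x 1 2 - x 0 0 - 1).toNat, (x 2 1 - x 0 0 - 1).toNat, (x 0 0).toNat,
          (x 1 1).toNat, (x 2 2).toNat], ?_, ?_⟩
        · rw [Finset.mem_coe, mem_B3]
          simp
          omega
        · ext i j
          fin_cases i <;> fin_cases j <;>
            simp [G3] <;> omega
  · intro hx
    simp only [Set.mem_union, Set.mem_image, Finset.mem_coe] at hx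
    rw [mem_Sset]
    rcases hx with (⟨w, hw, rfl⟩ | ⟨w, hw, rfl⟩) | ⟨w, hw, rfl⟩
    · rw [mem_B1] at hw
      simp only [G1]
      simp
      omega
    · rw [mem_B2] at hw
      simp only [G2]
      simp
      omega
    · rw [mem_B3] at hw
      simp only [G3]
      simp
      omega

lemma injG1 : Function.Injective G1 := by
  intro w v h
  have e1 := congrFun (congrFun h 2) 1
  have e2 := congrFun (congrFun h 0) 2
  have e3 := congrFun (congrFun h 1) 0
  have e4 := congrFun (congrFun h 0) 0
  have e5 := congrFun (congrFun h 1) 2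
  simp only [G1] at e1 e2 e3 e4 e5
  simp at e1 e2 e3 e4 e5
  funext i
  fin_cases i <;> simp <;> omega

lemma injG2 : Function.Injective G2 := by
  intro w v h
  have e1 := congrFun (congrFun h 1) 2
  have e2 := congrFun (congrFun h 2) 0
  have e3 := congrFun (congrFun h 0) 1
  have e4 := congrFun (congrFun h 0) 0
  have e5 := congrFun (congrFun h 2) 1
  simp only [G2] at e1 e2 e3 e4 e5
  simp at e1 e2 e3 e4 e5
  funext i
  fin_cases i <;> simp <;> omega

lemma injG3 : Function.Injective G3 := by
  intro w v h
  have e1 := congrFun (congrFun h 0) 0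
  have e2 := congrFun (congrFun h 1) 1
  have e3 := congrFun (congrFun h 2) 2
  have e4 := congrFun (congrFun h 1) 2
  have e5 := congrFun (congrFun h 2) 1
  simp only [G3] at e1 e2 e3 e4 e5
  simp at e1 e2 e3 e4 e5
  funext i
  fin_cases i <;> simp <;> omega

lemma disjG12 (A B : Set (Fin 5 → ℕ)) : Disjoint (G1 '' A) (G2 '' B) := by
  rw [Set.disjoint_left]
  rintro x ⟨w, _, rfl⟩ ⟨v, _, hv⟩
  have e1 := congrFun (congrFun hv 2) 1
  have e2 := congrFun (congrFun hv 1) 2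
  simp only [G1, G2] at e1 e2
  simp at e1 e2
  omega

lemma disjG13 (A B : Set (Fin 5 → ℕ)) : Disjoint (G1 '' A) (G3 '' B) := by
  rw [Set.disjoint_left]
  rintro x ⟨w, _, rfl⟩ ⟨v, _, hv⟩
  have e1 := congrFun (congrFun hv 2) 1
  have e2 := congrFun (congrFun hv 0) 0
  simp only [G1, G3] at e1 e2
  simp at e1 e2
  omega

lemma disjG23 (A B : Set (Fin 5 → ℕ)) : Disjoint (G2 '' A) (G3 '' B) := by
  rw [Set.disjoint_left]
  rintro x ⟨w, _, rfl⟩ ⟨v, _, hv⟩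
  have e1 := congrFun (congrFun hv 1) 2
  have e2 := congrFun (congrFun hv 0) 0
  simp only [G2, G3] at e1 e2
  simp at e1 e2
  omega

lemma cardB1 (t : ℕ) : (B1 t).card = (t+4).choose 4 := cardAdt 4 t

lemma cardB2 (t : ℕ) (ht : 0 < t) : (B2 t).card = (t+3).choose 4 := by
  have h : B2 t = Finset.Nat.antidiagonalTuple 5 (t-1) := by
    rw [B2]
    apply Finset.filter_true_of_mem
    intro w hw
    rw [Finset.Nat.mem_antidiagonalTuple] at hw
    omega
  rw [h, cardAdt]
  congr 1
  omega

lemma cardB3 (t : ℕ) (ht : 0 < t) : (B3 t).card = (t+2).choose 4 := by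
  rcases Nat.lt_or_ge t 2 with h2 | h2
  · interval_cases t
    have h : B3 1 = ∅ := by
      rw [B3]
      apply Finset.filter_false_of_mem
      intro w hw
      rw [Finset.Nat.mem_antidiagonalTuple] at hw
      omega
    rw [h]
    simp [Nat.choose_eq_zero_of_lt]
  · have h : B3 t = Finset.Nat.antidiagonalTuple 5 (t-2) := by
      rw [B3]
      apply Finset.filter_true_of_mem
      intro w hw
      rw [Finset.Nat.mem_antidiagonalTuple] at hw
      omega
    rw [h, cardAdt]
    congr 1
    omega

lemma pascal_combo (t : ℕ) :
    (t+4).choose 4 + ((t+3).choose 4 + (t+2).choose 4) = 3 * (t+3).choose 4 + (t+2).choose 2 := by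
  have p1 : (t+4).choose 4 = (t+3).choose 3 + (t+3).choose 4 := by
    have h := Nat.choose_succ_succ (t+3) 3
    norm_num at h
    exact h
  have p2 : (t+3).choose 4 = (t+2).choose 3 + (t+2).choose 4 := by
    have h := Nat.choose_succ_succ (t+2) 3
    norm_num at h
    exact h
  have p3 : (t+3).choose 3 = (t+2).choose 2 + (t+2).choose 3 := by
    have h := Nat.choose_succ_succ (t+2) 2
    norm_num at h
    exact h
  omega

lemma ncard_Sset (t : ℕ) (ht : 0 < t) :
    (Sset t).ncard = 3 * (t+3).choose 4 + (t+2).choose 2 := by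
  rw [Sset_eq t ht]
  have f1 : (G1 '' (B1 t : Set (Fin 5 → ℕ))).Finite := (B1 t).finite_toSet.image _
  have f2 : (G2 '' (B2 t : Set (Fin 5 → ℕ))).Finite := (B2 t).finite_toSet.image _
  have f3 : (G3 '' (B3 t : Set (Fin 5 → ℕ))).Finite := (B3 t).finite_toSet.image _
  rw [Set.ncard_union_eq (Set.disjoint_union_left.mpr ⟨disjG13 _ _, disjG23 _ _⟩)
    (f1.union f2) f3]
  rw [Set.ncard_union_eq (disjG12 _ _) f1 f2]
  rw [Set.ncard_image_of_injective _ injG1, Set.ncard_image_of_injective _ injG2,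
    Set.ncard_image_of_injective _ injG3]
  rw [Set.ncard_coe_finset, Set.ncard_coe_finset, Set.ncard_coe_finset]
  rw [cardB1, cardB2 t ht, cardB3 t ht]
  rw [add_assoc]
  exact pascal_combo t

theorem birkhoff_three_ehrhart :
    (∀ t : ℕ, 0 < t →
      {x : Matrix (Fin 3) (Fin 3) ℤ | (fun i j => (x i j : ℝ)) ∈
          ((t : ℝ) • (doublyStochastic ℝ (Fin 3) : Set (Matrix (Fin 3) (Fin 3) ℝ)) : Set (Matrix (Fin 3) (Fin 3) ℝ))}.ncard
        = 3 * Nat.choose (t + 3) 4 + Nat.choose (t + 2) 2) ∧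
      {x : Matrix (Fin 3) (Fin 3) ℤ | (fun i j => (x i j : ℝ)) ∈
          (doublyStochastic ℝ (Fin 3) : Set (Matrix (Fin 3) (Fin 3) ℝ))}.ncard = 6 := by
  have main : ∀ t : ℕ, 0 < t →
      {x : Matrix (Fin 3) (Fin 3) ℤ | (fun i j => (x i j : ℝ)) ∈
          ((t : ℝ) • (doublyStochastic ℝ (Fin 3) : Set (Matrix (Fin 3) (Fin 3) ℝ)) :
            Set (Matrix (Fin 3) (Fin 3) ℝ))}.ncard
        = 3 * Nat.choose (t + 3) 4 + Nat.choose (t + 2) 2 := by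
    intro t ht
    have hset : {x : Matrix (Fin 3) (Fin 3) ℤ | (fun i j => (x i j : ℝ)) ∈
          ((t : ℝ) • (doublyStochastic ℝ (Fin 3) : Set (Matrix (Fin 3) (Fin 3) ℝ)) :
            Set (Matrix (Fin 3) (Fin 3) ℝ))} = Sset t := by
      ext x
      simp only [Set.mem_setOf_eq, Sset]
      show (Matrix.of fun i j => (x i j : ℝ)) ∈ _ ↔ _
      rw [Set.mem_smul_set]
      have hts : (0:ℝ) ≤ (t:ℝ) := Nat.cast_nonneg t
      constructor
      · rintro ⟨y, hy, hxy⟩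
        obtain ⟨h1, h2, h3⟩ :=
          (exists_mem_doublyStochastic_eq_smul_iff
            (M := fun i j => (x i j : ℝ)) (s := (t:ℝ)) hts).mp ⟨y, hy, hxy.symm⟩
        refine ⟨fun i j => ?_, fun i => ?_, fun j => ?_⟩
        · exact_mod_cast h1 i j
        · exact_mod_cast h2 i
        · exact_mod_cast h3 j
      · rintro ⟨h1, h2, h3⟩
        obtain ⟨M', hM', hM2⟩ :=
          (exists_mem_doublyStochastic_eq_smul_iff
            (M := fun i j => (x i j : ℝ)) (s := (t:ℝ)) hts).mpr
            ⟨fun i j => by exact_mod_cast h1 i j,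
             fun i => by exact_mod_cast h2 i,
             fun j => by exact_mod_cast h3 j⟩
        exact ⟨M', hM', hM2.symm⟩
    rw [hset]
    exact ncard_Sset t ht
  refine ⟨main, ?_⟩
  have h1 := main 1 one_pos
  have hone : ((1:ℕ):ℝ) • (doublyStochastic ℝ (Fin 3) : Set (Matrix (Fin 3) (Fin 3) ℝ))
      = (doublyStochastic ℝ (Fin 3) : Set (Matrix (Fin 3) (Fin 3) ℝ)) := by
    rw [Nat.cast_one, one_smul]
  rw [hone] at h1
  rw [h1]
  decide
end
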